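/- Let P be a unital subsemigroup of a discrete group G and let X be a concrete product system over P with Fock representation λ. If the constructible ideal q_n^{-ε'} p_n ⋯ q_1⁻¹ p_1^ε P is empty (with p_1^{-ε}q_1⋯p_n⁻¹q_n^{ε'} = e), then (λ_{p_1}(ξ_{p_1})*)^ε λ_{q_1}(ξ_{q_1}) ⋯ λ_{p_n}(ξ_{p_n})* λ_{q_n}(ξ_{q_n})^{ε'} = 0 for all choices of vectors; consequently the core K_{∅, λ} vanishes. -/

import Mathlib

open scoped Classical

/-- The constructible set `qₙ^{-ε'} pₙ ⋯ q₁⁻¹ p₁^{ε} Z`. -/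
def psWord {M : Type*} [Monoid M] (ε ε' : Bool) (L : List (M × M)) (Z : Set M) : Set M :=
  match L with
  | [] => Z
  | (p, q) :: rest =>
    let Z0 : Set M := if ε then (p * ·) '' Z else Z
    let Z1 : Set M := (((p, q) :: rest).zip rest).foldl
      (fun W x => (x.2.1 * ·) '' ((x.1.2 * ·) ⁻¹' W)) Z0
    if ε' then ((((p, q) :: rest).getLast (List.cons_ne_nil _ _)).2 * ·) ⁻¹' Z1 else Z1

/-- The product `F₁(e₁)^{ε} F₂(e₁) ⋯ F₁(eₙ) F₂(eₙ)^{ε'}` in a monoid. -/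
def genProd {α R : Type*} [Monoid R] (ε ε' : Bool) (F₁ F₂ : α → R) (E : List α) : R :=
  (((List.range E.length).zip E).map (fun ie =>
    (if ie.1 = 0 ∧ ε = false then 1 else F₁ ie.2) *
    (if ie.1 = E.length - 1 ∧ ε' = false then 1 else F₂ ie.2))).prod

/-- The left creation operator `λ_p(ξ)` on the algebraic Fock module. -/
noncomputable def fockLam {M R : Type*} [Monoid M] [Mul R] [Zero R]
    (p : M) (ξ : R) : Function.End (M → R) :=
  fun f s => if h : ∃ u : M, p * u = s then ξ * f h.choose else 0

/-- The adjoint `λ_p(ξ)*` of the left creation operator on the algebraic Fock module. -/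
noncomputable def fockLamStar {M R : Type*} [Monoid M] [Mul R] [Star R]
    (p : M) (ξ : R) : Function.End (M → R) :=
  fun f s => star ξ * f (p * s)

lemma genProd_singleton {α R : Type*} [Monoid R] (ε ε' : Bool) (F₁ F₂ : α → R) (a : α) :
    genProd ε ε' F₁ F₂ [a] = (if ε then F₁ a else 1) * (if ε' then F₂ a else 1) := by
  cases ε <;> cases ε' <;> simp [genProd]

lemma genProd_cons_cons {α R : Type*} [Monoid R] (ε ε' : Bool) (F₁ F₂ : α → R) (a b : α)
    (l : List α) :
    genProd ε ε' F₁ F₂ (a :: b :: l)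
      = (if ε then F₁ a else 1) * F₂ a * genProd true ε' F₁ F₂ (b :: l) := by
  unfold genProd
  rw [List.length_cons, List.range_succ_eq_map, List.zip_cons_cons, List.zip_map_left,
    List.map_cons, List.map_map, List.prod_cons]
  congr 1
  · cases ε <;> simp
  · refine congrArg List.prod (List.map_congr_left fun ie _ => ?_)
    simp only [Function.comp_apply, Prod.map_apply, id_eq, List.length_cons,
      Nat.add_sub_cancel]
    obtain ⟨i, y⟩ := ie
    simp only [Prod.map_apply, id_eq]
    have h1 : ¬(i + 1 = 0 ∧ ε = false) := by simp
    have h2 : ¬(i = 0 ∧ true = false) := by simp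
    rw [if_neg h1, if_neg h2]
    congr 1
    by_cases h : i = l.length ∧ ε' = false
    · rw [if_pos ⟨by rw [h.1], h.2⟩, if_pos h]
    · rw [if_neg (fun hc => h ⟨Nat.succ.inj hc.1, hc.2⟩), if_neg h]

lemma psWord_singleton {M : Type*} [Monoid M] (ε ε' : Bool) (p q : M) (Z : Set M) :
    psWord ε ε' [(p, q)] Z
      = if ε' then (q * ·) ⁻¹' (if ε then (p * ·) '' Z else Z)
        else (if ε then (p * ·) '' Z else Z) := rfl

lemma psWord_cons_cons {M : Type*} [Monoid M] (ε ε' : Bool) (p q p' q' : M)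
    (L : List (M × M)) (Z : Set M) :
    psWord ε ε' ((p, q) :: (p', q') :: L) Z
      = psWord true ε' ((p', q') :: L) ((q * ·) ⁻¹' (if ε then (p * ·) '' Z else Z)) := rfl

lemma fock_key {M R : Type*} [Monoid M] [MulZeroClass R] [Star R] (f : M → R) :
    ∀ (E : List (M × R × M × R)) (ε ε' : Bool) (Z : Set M) (s : M), s ∈ Z →
      psWord ε ε' (E.map fun e => (e.1, e.2.2.1)) Z = ∅ →
      genProd ε ε' (fun e => fockLamStar e.1 e.2.1) (fun e => fockLam e.2.2.1 e.2.2.2) E f s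
        = 0 := by
  intro E
  induction E with
  | nil =>
    intro ε ε' Z s hs h
    exact absurd (h ▸ hs : s ∈ (∅ : Set M)) (Set.notMem_empty s)
  | cons a tl ih =>
    obtain ⟨p, ξ, q, η⟩ := a
    intro ε ε' Z s hs h
    have hstep : ∀ g : M → R, g (if ε then p * s else s) = 0 →
        (if ε then fockLamStar p ξ else (1 : Function.End (M → R))) g s = 0 := by
      intro g hg
      cases ε
      · exact hg
      · simp only [if_pos]
        show star ξ * g (p * s) = 0
        rw [show g (p * s) = 0 from hg, mul_zero]
    have hmem : (if ε then p * s else s) ∈ (if ε then (p * ·) '' Z else Z : Set M) := by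
      cases ε
      · simpa using hs
      · simpa using ⟨s, hs, rfl⟩
    cases tl with
    | nil =>
      rw [genProd_singleton]
      cases ε'
      · exfalso
        rw [List.map_cons, List.map_nil, psWord_singleton] at h
        simp only [if_neg Bool.false_ne_true] at h
        rw [h] at hmem
        exact Set.notMem_empty _ hmem
      · rw [List.map_cons, List.map_nil, psWord_singleton] at h
        simp only [if_pos] at h
        show (if ε = true then fockLamStar p ξ else 1) ((fockLam q η) f) s = 0
        refine hstep _ ?_
        show (if hh : ∃ u : M, q * u = (if ε then p * s else s)
            then η * f hh.choose else 0) = 0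
        rw [dif_neg]
        rintro ⟨u, hu⟩
        have : u ∈ (q * ·) ⁻¹' (if ε then (p * ·) '' Z else Z : Set M) := by
          simp only [Set.mem_preimage]
          rw [hu]
          exact hmem
        rw [h] at this
        exact Set.notMem_empty _ this
    | cons b rest =>
      rw [genProd_cons_cons]
      rw [List.map_cons, List.map_cons, psWord_cons_cons] at h
      show (if ε = true then fockLamStar p ξ else 1)
        ((fockLam q η) ((genProd true ε' (fun e => fockLamStar e.1 e.2.1)
          (fun e => fockLam e.2.2.1 e.2.2.2) (b :: rest)) f)) s = 0
      refine hstep _ ?_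
      show (if hh : ∃ u : M, q * u = (if ε then p * s else s)
          then η * (genProd true ε' (fun e => fockLamStar e.1 e.2.1)
            (fun e => fockLam e.2.2.1 e.2.2.2) (b :: rest)) f hh.choose else 0) = 0
      by_cases hh : ∃ u : M, q * u = (if ε then p * s else s)
      · rw [dif_pos hh]
        have hmem' : hh.choose ∈
            (q * ·) ⁻¹' (if ε then (p * ·) '' Z else Z : Set M) := by
          simp only [Set.mem_preimage]
          rw [hh.choose_spec]
          exact hmem
        rw [ih true ε' _ hh.choose hmem' h, mul_zero]
      · rw [dif_neg hh]

/-- If `qₙ^{-ε'} pₙ ⋯ q₁⁻¹ p₁^{ε} P = ∅` (with `p₁^{-ε} q₁ ⋯ pₙ⁻¹ qₙ^{ε'} = e`), then the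
operator word `(λ_{p₁}(ξ_{p₁})*)^{ε} λ_{q₁}(ξ_{q₁}) ⋯ λ_{pₙ}(ξ_{pₙ})* λ_{qₙ}(ξ_{qₙ})^{ε'}`
vanishes on the Fock space; consequently the core `K_{∅,λ}` vanishes. -/
theorem stmt15 {G : Type*} [Group G] (P : Submonoid G)
    {H : Type*} [NormedAddCommGroup H] [InnerProductSpace ℂ H] [CompleteSpace H]
    (X : ↥P → Set (H →L[ℂ] H))
    (hXclosed : ∀ p, IsClosed (X p))
    (hXestar : ∀ ξ ∈ X 1, star ξ ∈ X 1)
    (hXmul : ∀ (p q : ↥P) (ξ η : H →L[ℂ] H), ξ ∈ X p → η ∈ X q → ξ * η ∈ X (p * q))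
    (hXstar : ∀ (p q : ↥P) (ξ ζ : H →L[ℂ] H), ξ ∈ X p → ζ ∈ X (p * q) →
      star ξ * ζ ∈ X q)
    (ε ε' : Bool)
    (E : List (↥P × (H →L[ℂ] H) × ↥P × (H →L[ℂ] H)))
    (hE : ∀ e ∈ E, e.2.1 ∈ X e.1 ∧ e.2.2.2 ∈ X e.2.2.1)
    (hneutral : genProd ε ε' (fun e => ((e.1 : G))⁻¹) (fun e => ((e.2.2.1 : ↥P) : G)) E = 1)
    (hempty : psWord ε ε' (E.map fun e => (e.1, e.2.2.1)) Set.univ = (∅ : Set ↥P)) :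
    ∀ f : ↥P → (H →L[ℂ] H), (∀ s, f s ∈ X s) →
      genProd ε ε' (fun e => fockLamStar e.1 e.2.1) (fun e => fockLam e.2.2.1 e.2.2.2) E f
        = 0 := by
  intro f _
  funext s
  exact fock_key f E ε ε' Set.univ s (Set.mem_univ s) hempty
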